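/- Let d be any score scheme on Σ ∪ {−} that is a metric and satisfies d(a,b) ≤ d(a,−) for all a, b ∈ Σ. Then every multiple alignment (sum-of-pairs scoring) of k length-2 sequences has cost at least the cost of their trivial (gap-free, 2-column) alignment. -/
import Mathlib


/-- Sum-of-pairs cost of a `k × t` alignment matrix under a score scheme `d`. -/
def sopCostD {σ : Type*} {k t : ℕ} (d : Option σ → Option σ → ℝ)
    (M : Fin k → Fin t → Option σ) : ℝ :=
  ∑ m, ∑ m' ∈ Finset.Ioi m, ∑ j, d (M m j) (M m' j)

/-- `M` is an alignment of the length-2 sequences `s₁ m · s₂ m`. -/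
def IsAlignment2 {σ : Type*} {k t : ℕ} (s₁ s₂ : Fin k → σ)
    (M : Fin k → Fin t → Option σ) : Prop :=
  ∀ m, ∃ j₁ j₂ : Fin t, j₁ < j₂ ∧ M m j₁ = some (s₁ m) ∧ M m j₂ = some (s₂ m) ∧
    ∀ j, j ≠ j₁ → j ≠ j₂ → M m j = none

private lemma pair_bound {σ : Type*} {t : ℕ} (d : Option σ → Option σ → ℝ)
    (hsymm : ∀ x y, d x y = d y x) (hnonneg : ∀ x y, 0 ≤ d x y)
    (htri : ∀ x y z, d x y ≤ d x z + d z y)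
    (hkey : ∀ a b : σ, d (some a) (some b) ≤ d (some a) none)
    (A B : Fin t → Option σ) (a b a' b' : σ)
    (j₁ j₂ j₁' j₂' : Fin t) (h12 : j₁ < j₂) (h12' : j₁' < j₂')
    (hA1 : A j₁ = some a) (hA2 : A j₂ = some b)
    (hA0 : ∀ j, j ≠ j₁ → j ≠ j₂ → A j = none)
    (hB1 : B j₁' = some a') (hB2 : B j₂' = some b')
    (hB0 : ∀ j, j ≠ j₁' → j ≠ j₂' → B j = none) :
    d (some a) (some a') + d (some b) (some b') ≤ ∑ j, d (A j) (B j) := by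
  have key2 : ∀ x y : σ, d (some x) (some y) ≤ d none (some y) := fun x y => by
    rw [hsymm none, hsymm (some x)]; exact hkey y x
  have hsub : ∀ S : Finset (Fin t), ∑ j ∈ S, d (A j) (B j) ≤ ∑ j, d (A j) (B j) :=
    fun S => Finset.sum_le_sum_of_subset_of_nonneg (Finset.subset_univ S)
      (fun i _ _ => hnonneg _ _)
  have h1 : j₁ ≠ j₂ := ne_of_lt h12
  by_cases h11 : j₁ = j₁'
  · subst h11
    have h2 : j₁ ≠ j₂' := ne_of_lt h12'
    by_cases h22 : j₂ = j₂'
    · subst h22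
      refine le_trans (le_of_eq ?_) (hsub {j₁, j₂})
      rw [Finset.sum_pair h1, hA1, hA2, hB1, hB2]
    · have hBj2 : B j₂ = none := hB0 j₂ (Ne.symm h1) h22
      have hAj2' : A j₂' = none := hA0 j₂' (Ne.symm h2) (fun h => h22 h.symm)
      refine le_trans ?_ (hsub {j₁, j₂, j₂'})
      rw [show ({j₁, j₂, j₂'} : Finset (Fin t)) = insert j₁ {j₂, j₂'} from rfl,
        Finset.sum_insert (by simp [h1, h2]), Finset.sum_pair h22,
        hA1, hB1, hA2, hBj2, hAj2', hB2]
      linarith [htri (some b) (some b') (none : Option σ)]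
  · by_cases h22 : j₂ = j₂'
    · subst h22
      have h2' : j₁' ≠ j₂ := ne_of_lt h12'
      have hBj1 : B j₁ = none := hB0 j₁ h11 h1
      have hAj1' : A j₁' = none := hA0 j₁' (Ne.symm h11) h2'
      refine le_trans ?_ (hsub {j₁, j₁', j₂})
      rw [show ({j₁, j₁', j₂} : Finset (Fin t)) = insert j₁ {j₁', j₂} from rfl,
        Finset.sum_insert (by simp [h11, h1]), Finset.sum_pair h2',
        hA1, hBj1, hAj1', hB1, hA2, hB2]
      linarith [htri (some a) (some a') (none : Option σ)]
    · by_cases h12q : j₁ = j₂'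
      · subst h12q
        have hlt : j₁' < j₂ := h12'.trans h12
        have hBj2 : B j₂ = none := hB0 j₂ (ne_of_lt hlt).symm (ne_of_lt h12).symm
        have hAj1' : A j₁' = none := hA0 j₁' (ne_of_lt h12') (ne_of_lt hlt)
        refine le_trans ?_ (hsub {j₁', j₁, j₂})
        rw [show ({j₁', j₁, j₂} : Finset (Fin t)) = insert j₁' {j₁, j₂} from rfl,
          Finset.sum_insert (by simp [ne_of_lt h12', ne_of_lt hlt]),
          Finset.sum_pair h1, hAj1', hB1, hA1, hB2, hA2, hBj2]
        linarith [key2 a a', hkey b b', hnonneg (some a) (some b')]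
      · by_cases h21 : j₂ = j₁'
        · subst h21
          have hlt : j₁ < j₂' := h12.trans h12'
          have hAj2' : A j₂' = none := hA0 j₂' (ne_of_lt hlt).symm (ne_of_lt h12').symm
          have hBj1 : B j₁ = none := hB0 j₁ (ne_of_lt h12) (ne_of_lt hlt)
          refine le_trans ?_ (hsub {j₁, j₂, j₂'})
          rw [show ({j₁, j₂, j₂'} : Finset (Fin t)) = insert j₁ {j₂, j₂'} from rfl,
            Finset.sum_insert (by simp [h1, ne_of_lt hlt]),
            Finset.sum_pair (ne_of_lt h12'), hA1, hBj1, hA2, hB1, hAj2', hB2]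
          linarith [hkey a a', key2 b b', hnonneg (some b) (some a')]
        · have h2' : j₁' ≠ j₂' := ne_of_lt h12'
          have hBj1 : B j₁ = none := hB0 j₁ h11 h12q
          have hBj2 : B j₂ = none := hB0 j₂ (fun h => h21 h) h22
          have hAj1' : A j₁' = none := hA0 j₁' (Ne.symm h11) (fun h => h21 h.symm)
          have hAj2' : A j₂' = none := hA0 j₂' (Ne.symm h12q) (Ne.symm h22)
          refine le_trans ?_ (hsub {j₁, j₂, j₁', j₂'})
          rw [show ({j₁, j₂, j₁', j₂'} : Finset (Fin t))
                = insert j₁ (insert j₂ {j₁', j₂'}) from rfl,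
            Finset.sum_insert (by simp [h1, h11, h12q]),
            Finset.sum_insert (by simp [h21, h22]), Finset.sum_pair h2',
            hA1, hBj1, hA2, hBj2, hAj1', hB1, hAj2', hB2]
          linarith [hkey a a', hkey b b', hnonneg (none : Option σ) (some a'),
            hnonneg (none : Option σ) (some b')]

/-- For any metric `d` on `Σ ∪ {−}` with `d(a,b) ≤ d(a,−)` for all characters `a, b`, every
alignment of `k` length-2 sequences costs at least the cost of their trivial gap-free
2-column alignment. -/
theorem stmt_12 {σ : Type*} {k : ℕ} (d : Option σ → Option σ → ℝ)
    (hsymm : ∀ x y, d x y = d y x) (hnonneg : ∀ x y, 0 ≤ d x y)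
    (hself : ∀ x, d x x = 0) (htri : ∀ x y z, d x y ≤ d x z + d z y)
    (hkey : ∀ a b : σ, d (some a) (some b) ≤ d (some a) none)
    (s₁ s₂ : Fin k → σ) :
    ∀ t (M : Fin k → Fin t → Option σ), IsAlignment2 s₁ s₂ M →
      (∑ m, ∑ m' ∈ Finset.Ioi m, (d (some (s₁ m)) (some (s₁ m')) +
        d (some (s₂ m)) (some (s₂ m')))) ≤ sopCostD d M := by
  intro t M hM
  unfold sopCostD
  refine Finset.sum_le_sum fun m _ => Finset.sum_le_sum fun m' _ => ?_
  obtain ⟨j₁, j₂, h12, hA1, hA2, hA0⟩ := hM m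
  obtain ⟨j₁', j₂', h12', hB1, hB2, hB0⟩ := hM m'
  exact pair_bound d hsymm hnonneg htri hkey (M m) (M m') _ _ _ _
    j₁ j₂ j₁' j₂' h12 h12' hA1 hA2 hA0 hB1 hB2 hB0
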